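/- Let π be the free product of Z with the free nilpotent group of class 2 on two generators, i.e. π ≅ Z * (F(2)/F(2)₍₃₎). Then for every surjective homomorphism φ: π → Z, the abelianization of ker(φ), viewed as a module over Z[t,t⁻¹] via the deck transformation action, has rank ≥ 1 over Z[t,t⁻¹]. -/

import Mathlib

/-- The free product `π = ℤ * H`, where `H = F(2)/F(2)₍₃₎` is the free nilpotent
group of class 2 on two generators (the discrete Heisenberg group). -/
abbrev PiGrp : Type :=
  Monoid.Coprod (Multiplicative ℤ)
    (FreeGroup (Fin 2) ⧸ Subgroup.lowerCentralSeries (⊤ : Subgroup (FreeGroup (Fin 2))) 2)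

/-- The abelianization of the kernel of `φ : π → ℤ`, written additively. -/
abbrev kerAb (φ : PiGrp →* Multiplicative ℤ) : Type := Additive (Abelianization ↥φ.ker)

/-- The deck transformation: the `ℤ`-linear endomorphism of `(ker φ)^{ab}`
induced by conjugation by a lift `g` of the generator `t`. -/
noncomputable def deck (φ : PiGrp →* Multiplicative ℤ) (g : PiGrp) :
    Module.End ℤ (kerAb φ) :=
  (MonoidHom.toAdditive
    (Abelianization.map (MulAut.conjNormal (H := φ.ker) g).toMonoidHom)).toIntLinearMap

open LaurentPolynomial Multiplicative SemidirectProduct Polynomial commutatorElement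

noncomputable section

local notation "R" => LaurentPolynomial ℤ

def mulT (n : ℤ) : R ≃+ R where
  toFun r := T n * r
  invFun r := T (-n) * r
  left_inv r := by show T (-n) * (T n * r) = r; rw [← mul_assoc, ← T_add]; simp
  right_inv r := by show T n * (T (-n) * r) = r; rw [← mul_assoc, ← T_add]; simp
  map_add' _ _ := mul_add _ _ _

def Tact : Multiplicative ℤ →* MulAut (Multiplicative R) :=
  MonoidHom.mk' (fun n => AddEquiv.toMultiplicative (mulT n.toAdd))
    (by
      intro a b
      refine MulEquiv.ext fun r => ?_
      show (T ((a*b).toAdd) * r.toAdd) = T a.toAdd * (T b.toAdd * r.toAdd)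
      rw [toAdd_mul, T_add, mul_assoc])

@[simp] lemma Tact_apply (n : Multiplicative ℤ) (r : Multiplicative R) :
    (Tact n r).toAdd = T n.toAdd * r.toAdd := rfl

abbrev GG := Multiplicative R ⋊[Tact] Multiplicative ℤ

def chi : Multiplicative ℤ →* GG :=
  MonoidHom.mk' (fun n => ⟨ofAdd (1 - T n.toAdd), n⟩)
    (by
      intro a b
      ext : 1
      · show (1 - T (a*b).toAdd : R) =
          (1 - T a.toAdd) + T a.toAdd * (1 - T b.toAdd)
        rw [toAdd_mul, T_add]; ring
      · rfl)

@[simp] lemma chi_left (n : Multiplicative ℤ) : ((chi n).left).toAdd = 1 - T n.toAdd := rfl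
@[simp] lemma chi_right (n : Multiplicative ℤ) : (chi n).right = n := rfl

lemma T_ne_one {k : ℤ} (hk : k ≠ 0) : (T k : R) ≠ 1 := by
  have key : ∀ n : ℕ, n ≠ 0 → (T (n : ℤ) : R) ≠ 1 := by
    intro n hn h
    have h2 : (Polynomial.X ^ n : Polynomial ℤ).toLaurent = (1 : Polynomial ℤ).toLaurent := by
      simp [h]
    have := Polynomial.toLaurent_injective h2
    have := congrArg (fun p => Polynomial.coeff p 0) this
    simp [Polynomial.coeff_X_pow, hn] at this
    omega
  rcases lt_trichotomy k 0 with h | h | h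
  · intro he
    have : (T (-k) : R) * T k = 1 := by rw [← T_add]; simp
    rw [he, mul_one] at this
    exact key (-k).toNat (by omega) (by rwa [Int.toNat_of_nonneg (by omega)])
  · exact absurd h hk
  · intro he
    exact key k.toNat (by omega) (by rwa [Int.toNat_of_nonneg (by omega)])

lemma comm_left (u : R) (b m : ℤ) :
    ((⁅(⟨ofAdd u, ofAdd b⟩ : GG), SemidirectProduct.inr (ofAdd m)⁆ : GG)).left.toAdd
      = u - T m * u := by
  show ((⟨ofAdd u, ofAdd b⟩ * SemidirectProduct.inr (ofAdd m) *
    (⟨ofAdd u, ofAdd b⟩ : GG)⁻¹ * (SemidirectProduct.inr (ofAdd m))⁻¹ : GG)).left.toAdd = _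
  simp only [mul_left, mul_right, inv_left, inv_right, left_inr, right_inr,
    toAdd_mul, toAdd_inv, toAdd_ofAdd, Tact_apply, one_mul, mul_one, map_one,
    toAdd_one, neg_zero, mul_zero, add_zero]
  have hT : (T (b + m) : R) * T (-b) = T m := by
    rw [← T_add]; congr 1; ring
  rw [mul_neg, mul_neg, ← mul_assoc, hT]; ring

theorem main_lemma (φ : PiGrp →* Multiplicative ℤ) (g : PiGrp)
    (hg : φ g = ofAdd (1 : ℤ))
    (Φ : PiGrp →* GG) (hΦ : ∀ x, (Φ x).right = φ x)
    (w : PiGrp) (hw : φ w = 1) (hwl : ((Φ w).left).toAdd ≠ 0) :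
    ∃ a : kerAb φ, ∀ p : Polynomial ℤ, p ≠ 0 →
      (Polynomial.aeval (deck φ g) p) a ≠ 0 := by
  have hker : ∀ k : φ.ker, (Φ (k : PiGrp)).right = 1 := fun k => by
    rw [hΦ]; exact k.2
  let ψ : φ.ker →* Multiplicative R := MonoidHom.mk'
    (fun k => (Φ (k : PiGrp)).left)
    (by
      intro k₁ k₂
      show (Φ ((k₁ : PiGrp) * k₂)).left = _
      rw [map_mul, mul_left, hker k₁, map_one, MulAut.one_apply])
  let ψ' : Abelianization φ.ker →* Multiplicative R := Abelianization.lift ψ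
  let L : kerAb φ →+ R := MonoidHom.toAdditiveLeft ψ'
  have hL : ∀ k : φ.ker,
      L (Additive.ofMul (Abelianization.of k)) = (Φ (k : PiGrp)).left.toAdd := fun k => rfl
  have hdeck : ∀ x : kerAb φ, L (deck φ g x) = T 1 * L x := by
    intro x
    obtain ⟨k, hk⟩ := QuotientGroup.mk_surjective (Additive.toMul x)
    have hx : x = Additive.ofMul (Abelianization.of k) := (congrArg Additive.ofMul hk).symm
    subst hx
    have h1 : deck φ g (Additive.ofMul (Abelianization.of k))
        = Additive.ofMul (Abelianization.of (MulAut.conjNormal g k)) := rfl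
    rw [h1, hL, hL]
    have hcoe : ((MulAut.conjNormal g k : φ.ker) : PiGrp) = g * k * g⁻¹ :=
      MulAut.conjNormal_apply g k
    rw [hcoe, map_mul, map_mul, map_inv]
    simp only [mul_left, mul_right, inv_left, inv_right, hker k, mul_one, map_inv,
      toAdd_mul, Tact_apply]
    rw [hΦ, hg]
    simp only [toAdd_ofAdd, map_inv, MulAut.apply_inv_self, toAdd_inv]
    ring
  have hpow : ∀ (n : ℕ) (x : kerAb φ), L (((deck φ g) ^ n) x) = T (n : ℤ) * L x := by
    intro n
    induction n with
    | zero => intro x; simp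
    | succ n ih =>
        intro x
        rw [pow_succ, Module.End.mul_apply, ih, hdeck, ← mul_assoc, ← T_add]
        push_cast
        ring_nf
  have haeval : ∀ (p : Polynomial ℤ) (x : kerAb φ),
      L ((Polynomial.aeval (deck φ g) p) x) = p.toLaurent * L x := by
    intro p
    induction p using Polynomial.induction_on' with
    | add p q hp hq =>
        intro x
        rw [map_add, LinearMap.add_apply, map_add, hp, hq, map_add, add_mul]
    | monomial n c =>
        intro x
        rw [Polynomial.aeval_monomial, Module.End.mul_apply,
          Module.algebraMap_end_apply, map_zsmul, hpow,
          Polynomial.toLaurent_C_mul_T, zsmul_eq_mul]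
        rw [eq_intCast (LaurentPolynomial.C : ℤ →+* R) c]
        push_cast
        ring
  refine ⟨Additive.ofMul (Abelianization.of ⟨w, hw⟩), fun p hp hzero => ?_⟩
  have h0 := haeval p (Additive.ofMul (Abelianization.of ⟨w, hw⟩))
  rw [hzero, map_zero, hL] at h0
  exact (mul_ne_zero (Polynomial.toLaurent_ne_zero.mpr hp) hwl) h0.symm

def iotaR : Multiplicative ℤ →* Multiplicative R :=
  AddMonoidHom.toMultiplicative (Int.castAddHom R)


/-- For every surjective `φ : ℤ * (F(2)/F(2)₍₃₎) → ℤ`, the abelianization of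
`ker φ`, as a `ℤ[t,t⁻¹]`-module via conjugation by a lift of `t`, has rank ≥ 1:
there is an element annihilated by no nonzero polynomial in the deck
transformation. -/
theorem kernel_abelianization_rank_ge_one
    (φ : PiGrp →* Multiplicative ℤ) (hφ : Function.Surjective φ)
    (g : PiGrp) (hg : φ g = Multiplicative.ofAdd (1 : ℤ)) :
    ∃ a : kerAb φ, ∀ p : Polynomial ℤ, p ≠ 0 →
      (Polynomial.aeval (deck φ g) p) a ≠ 0 := by

  classical
  by_cases hβ : ∀ h, φ (Monoid.Coprod.inr h) = 1
  · -- φ is trivial on the Heisenberg factor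
    set θ₀ : FreeGroup (Fin 2) →* Multiplicative ℤ :=
      FreeGroup.lift (fun _ => ofAdd (1 : ℤ)) with hθ₀
    have hLCS : ∀ x ∈ Subgroup.lowerCentralSeries (⊤ : Subgroup (FreeGroup (Fin 2))) 2, θ₀ x = 1 := by
      intro x hx
      have h1 : Subgroup.lowerCentralSeries (⊤ : Subgroup (FreeGroup (Fin 2))) 2 ≤ commutator _ := by
        rw [← Subgroup.top_lowerCentralSeries_one]
        exact Subgroup.lowerCentralSeries_antitone _ (by norm_num)
      exact Abelianization.commutator_subset_ker θ₀ (h1 hx)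
    set θ₁ := QuotientGroup.lift _ θ₀ hLCS with hθ₁
    set Φ := Monoid.Coprod.lift
      ((SemidirectProduct.inr : Multiplicative ℤ →* GG).comp (φ.comp Monoid.Coprod.inl))
      ((SemidirectProduct.inl : Multiplicative R →* GG).comp (iotaR.comp θ₁)) with hΦdef
    have hΦ : ∀ x, (Φ x).right = φ x := by
      have : SemidirectProduct.rightHom.comp Φ = φ := by
        apply Monoid.Coprod.hom_ext
        · refine MonoidHom.ext fun n => ?_
          simp [hΦdef]
          rfl
        · ext h
          simp only [MonoidHom.comp_apply, hΦdef, Monoid.Coprod.lift_apply_inr]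
          simp only [MonoidHom.comp_apply, rightHom_comp_inl, rightHom_eq_right, right_inl]
          exact (hβ _).symm
      intro x
      exact congrArg (fun f => f x) this
    refine main_lemma φ g hg Φ hΦ
      (Monoid.Coprod.inr (QuotientGroup.mk (FreeGroup.of 0))) (hβ _) ?_
    rw [hΦdef]
    rw [Monoid.Coprod.lift_apply_inr]
    simp only [MonoidHom.comp_apply, left_inl, hθ₁]
    change toAdd (iotaR (θ₀ (FreeGroup.of 0))) ≠ 0
    rw [hθ₀, FreeGroup.lift_apply_of]
    simp [iotaR]
  · push_neg at hβ
    obtain ⟨h₀, hh₀⟩ := hβ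
    have hb : (φ (Monoid.Coprod.inr h₀)).toAdd ≠ 0 := by
      simpa using hh₀
    by_cases hm : φ (Monoid.Coprod.inl (ofAdd (1 : ℤ))) = 1
    · -- φ trivial on the ℤ factor
      have hinl : ∀ n : Multiplicative ℤ, φ (Monoid.Coprod.inl n) = 1 := by
        intro n
        have hn : n = (ofAdd (1 : ℤ)) ^ n.toAdd := by
          rw [← ofAdd_zsmul]
          simp
        rw [hn, map_zpow, map_zpow, hm, one_zpow]
      set Φ := Monoid.Coprod.lift
        ((SemidirectProduct.inl : Multiplicative R →* GG).comp iotaR)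
        (chi.comp (φ.comp Monoid.Coprod.inr)) with hΦdef
      have hΦ : ∀ x, (Φ x).right = φ x := by
        have : SemidirectProduct.rightHom.comp Φ = φ := by
          apply Monoid.Coprod.hom_ext
          · refine MonoidHom.ext fun n => ?_
            show (Φ (Monoid.Coprod.inl n)).right = φ (Monoid.Coprod.inl n)
            rw [hinl]; rfl
          · refine MonoidHom.ext fun h => ?_
            simp [hΦdef]
            rfl
        intro x
        exact congrArg (fun f => f x) this
      refine main_lemma φ g hg Φ hΦ (Monoid.Coprod.inl (ofAdd (1 : ℤ))) (hinl _) ?_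
      rw [hΦdef, Monoid.Coprod.lift_apply_inl]
      simp [iotaR]
    · -- φ nontrivial on both factors
      have hmz : (φ (Monoid.Coprod.inl (ofAdd (1 : ℤ)))).toAdd ≠ 0 := by
        simpa using hm
      set Φ := Monoid.Coprod.lift
        ((SemidirectProduct.inr : Multiplicative ℤ →* GG).comp (φ.comp Monoid.Coprod.inl))
        (chi.comp (φ.comp Monoid.Coprod.inr)) with hΦdef
      have hΦ : ∀ x, (Φ x).right = φ x := by
        have : SemidirectProduct.rightHom.comp Φ = φ := by
          apply Monoid.Coprod.hom_ext
          · refine MonoidHom.ext fun n => ?_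
            simp [hΦdef]
            rfl
          · refine MonoidHom.ext fun h => ?_
            simp [hΦdef]
            rfl
        intro x
        exact congrArg (fun f => f x) this
      refine main_lemma φ g hg Φ hΦ
        ⁅(Monoid.Coprod.inr h₀ : PiGrp), (Monoid.Coprod.inl (ofAdd (1 : ℤ)) : PiGrp)⁆ ?_ ?_
      · rw [map_commutatorElement]
        exact commutatorElement_eq_one_iff_commute.mpr (Commute.all _ _)
      · rw [map_commutatorElement]
        have e1 : Φ (Monoid.Coprod.inr h₀)
            = ⟨ofAdd (1 - T (φ (Monoid.Coprod.inr h₀)).toAdd),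
                ofAdd (φ (Monoid.Coprod.inr h₀)).toAdd⟩ := by
          rw [hΦdef, Monoid.Coprod.lift_apply_inr]
          rfl
        have e2 : Φ (Monoid.Coprod.inl (ofAdd (1 : ℤ)))
            = SemidirectProduct.inr (ofAdd (φ (Monoid.Coprod.inl (ofAdd (1:ℤ)))).toAdd) := by
          rw [hΦdef, Monoid.Coprod.lift_apply_inl]
          rfl
        rw [e1, e2, comm_left]
        have : (1 : R) - T (φ (Monoid.Coprod.inr h₀)).toAdd -
            T (φ (Monoid.Coprod.inl (ofAdd (1:ℤ)))).toAdd *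
              (1 - T (φ (Monoid.Coprod.inr h₀)).toAdd)
            = (1 - T (φ (Monoid.Coprod.inl (ofAdd (1:ℤ)))).toAdd) *
              (1 - T (φ (Monoid.Coprod.inr h₀)).toAdd) := by ring
        rw [this]
        exact mul_ne_zero (sub_ne_zero.mpr (Ne.symm (T_ne_one hmz)))
          (sub_ne_zero.mpr (Ne.symm (T_ne_one hb)))

end
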